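/- arXiv:2601.04289 — 2 statements merged into one kernel-verified Lean document; each statement's English description precedes it below -/
import Mathlib

section
/- Define ε(x) = T₀(C(x)) - T₀(x) - α + (if x is even then 1 else 0), where T₀(x) = log(x+1/5)/log 6, α = log 3/log 6, and C is the Collatz map. Then for every integer x ≥ 3, 0 < ε(x) ≤ 1/(x log 6). -/
/-! Multiplying by the weight `6` on even steps, both branches of the Collatz map send
`x + 1/5` to `3 (x + 2/5)`, so `ε x = log (1 + 1/(5x+1)) / log 6` for every `x`.
Positivity and the upper bound then come from `0 < log (1 + t) ≤ t` for `t > 0`. -/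

def collatz (n : ℕ) : ℕ := if Even n then n / 2 else 3 * n + 1

noncomputable def T₀ (x : ℝ) : ℝ := Real.log (x + 1 / 5) / Real.log 6

noncomputable def α : ℝ := Real.log 3 / Real.log 6

noncomputable def ε (x : ℕ) : ℝ :=
  T₀ (collatz x : ℝ) - T₀ (x : ℝ) - α + (if Even x then 1 else 0)

open Real

lemma collatz_add_fifth_mul (x : ℕ) :
    ((collatz x : ℝ) + 1 / 5) * (if Even x then 6 else 1) = 3 * ((x : ℝ) + 2 / 5) := by
  unfold collatz
  split_ifs with h
  · obtain ⟨y, rfl⟩ := h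
    rw [show (y + y) / 2 = y by omega]
    push_cast
    ring
  · push_cast
    ring

lemma ε_eq_log_one_add (x : ℕ) : ε x = log (1 + 1 / (5 * x + 1)) / log 6 := by
  have hlog6 : log 6 ≠ 0 := (log_pos (by norm_num)).ne'
  have hweight : log (if Even x then (6 : ℝ) else 1) = if Even x then log 6 else 0 := by
    split_ifs <;> simp
  have hstep := congrArg log (collatz_add_fifth_mul x)
  rw [log_mul (by positivity) (by split_ifs <;> norm_num), hweight,
    log_mul (by norm_num) (by positivity)] at hstep
  have hratio : 1 + 1 / (5 * (x : ℝ) + 1) = (x + 2 / 5) / (x + 1 / 5) := by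
    field_simp
    ring
  rw [hratio, log_div (by positivity) (by positivity)]
  unfold ε T₀ α
  rw [eq_div_iff hlog6]
  split_ifs at hstep ⊢ <;>
    simp only [add_mul, sub_mul, div_mul_cancel₀ _ hlog6, one_mul, zero_mul] <;> linarith

theorem error_bound (x : ℕ) (hx : 3 ≤ x) :
    0 < ε x ∧ ε x ≤ 1 / ((x : ℝ) * Real.log 6) := by
  have hlog6 : 0 < log 6 := log_pos (by norm_num)
  have hx0 : (0 : ℝ) < x := by exact_mod_cast (by omega : 0 < x)
  set t : ℝ := 1 / (5 * x + 1)
  have ht : 0 < t := by positivity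
  rw [ε_eq_log_one_add]
  refine ⟨div_pos (log_pos (by linarith)) hlog6, ?_⟩
  calc log (1 + t) / log 6 ≤ t / log 6 := by
        gcongr
        simpa using log_le_sub_one_of_pos (by linarith : 0 < 1 + t)
    _ ≤ 1 / x / log 6 := by
        gcongr
        exact one_div_le_one_div_of_le hx0 (by linarith)
    _ = 1 / (x * log 6) := div_div _ _ _
end

section
/- Define ε(x) as in the near-conjugacy: ε(x) = T₀(C(x)) - T₀(x) - α + (if x even then 1 else 0), with T₀(x) = log(x+1/5)/log 6 and α = log 3/log 6. Then ε(x) → 0 as x → ∞ along the positive integers. -/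
/-!
Shifting by `1/5` makes both branches of the Collatz map multiplicative:
`n / 2 + 1/5 = (n + 2/5) / 2` and `3n + 1 + 1/5 = 3 (n + 2/5)`.
Since `log 6 = log 2 + log 3`, both branches give `ε n = T₀ (n + 1/5) - T₀ n`,
a difference `logb 6 (y + 1/5) - logb 6 y`, which tends to `0` as `y → ∞`.
-/

open Filter Topology Real

lemma T₀_eq_logb (x : ℝ) : T₀ x = logb 6 (x + 1 / 5) := rfl

lemma T₀_collatz_of_even {n : ℕ} (hn : Even n) :
    T₀ (collatz n) = T₀ (n + 1 / 5) - log 2 / log 6 := by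
  obtain ⟨k, rfl⟩ := hn
  have hk : ((k + k) / 2 : ℕ) = k := by omega
  have hpos : (0 : ℝ) < k + 1 / 5 := by positivity
  simp only [collatz, show Even (k + k) from ⟨k, rfl⟩, if_true, hk, T₀, Nat.cast_add]
  rw [show (k + k + 1 / 5 + 1 / 5 : ℝ) = (k + 1 / 5) * 2 by ring,
    log_mul hpos.ne' two_ne_zero, add_div, add_sub_cancel_right]

lemma T₀_collatz_of_odd {n : ℕ} (hn : ¬Even n) :
    T₀ (collatz n) = T₀ (n + 1 / 5) + α := by
  have hpos : (0 : ℝ) < n + 1 / 5 + 1 / 5 := by positivity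
  simp only [collatz, hn, if_false, T₀, α, Nat.cast_add, Nat.cast_mul, Nat.cast_ofNat,
    Nat.cast_one]
  rw [show (3 * n + 1 + 1 / 5 : ℝ) = (n + 1 / 5 + 1 / 5) * 3 by ring,
    log_mul hpos.ne' three_ne_zero, add_div]

lemma ε_eq_T₀_add_sub_T₀ (n : ℕ) : ε n = T₀ (n + 1 / 5) - T₀ n := by
  by_cases hn : Even n
  · have hlog6 : log 6 = log 2 + log 3 := by
      rw [show (6 : ℝ) = 2 * 3 by norm_num, log_mul two_ne_zero three_ne_zero]
    have hlog6_pos : 0 < log 6 := log_pos (by norm_num)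
    rw [ε, T₀_collatz_of_even hn, if_pos hn, α]
    field_simp
    linarith
  · rw [ε, T₀_collatz_of_odd hn, if_neg hn]
    ring

lemma tendsto_T₀_add_sub_T₀ (c : ℝ) :
    Tendsto (fun x => T₀ (x + c) - T₀ x) atTop (𝓝 0) := by
  have := (tendsto_logb_comp_add_sub_logb (b := 6) c).comp
    (tendsto_atTop_add_const_right _ (1 / 5) tendsto_id)
  refine this.congr fun x => ?_
  simp only [Function.comp_apply, id, T₀_eq_logb, add_right_comm x c]

theorem error_tendsto_zero :
    Filter.Tendsto (fun x : ℕ => ε x) Filter.atTop (nhds 0) := by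
  exact ((tendsto_T₀_add_sub_T₀ (1 / 5)).comp tendsto_natCast_atTop_atTop).congr
    fun n => (ε_eq_T₀_add_sub_T₀ n).symm
end
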